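/- arXiv:1507.07549 — 2 statements merged into one kernel-verified Lean document; each statement's English description precedes it below -/
import Mathlib

section
/- Let E, F be vector lattices with F Dedekind complete, T : E → F a positive orthogonally additive order bounded operator, and x₁, x₂ ∈ E with x₁ ⊥ x₂. Then π^{x₁+x₂}T = π^{x₁}T + π^{x₂}T, where π^{x}T(e) = sup{T(y) : y is a fragment of both e and x}. -/
open scoped BigOperators

section Defs
variable {E F : Type*}
variable [Lattice E] [AddCommGroup E] [CovariantClass E E (· + ·) (· ≤ ·)]
variable [Lattice F] [AddCommGroup F] [CovariantClass F F (· + ·) (· ≤ ·)]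

/-- Disjointness in a vector lattice: `|x| ⊓ |y| = 0`. -/
def EDisj (x y : E) : Prop := |x| ⊓ |y| = 0

/-- `y` is a fragment (component) of `x`: `y ⊥ (x - y)`. -/
def Fragment (y x : E) : Prop := EDisj y (x - y)

/-- Orthogonally additive operator. -/
def OrthAdditive (T : E → F) : Prop := ∀ x y : E, EDisj x y → T (x + y) = T x + T y

/-- Positive (in the orthogonally additive sense). -/
def PositiveOp (T : E → F) : Prop := ∀ x : E, 0 ≤ T x

/-- Order bounded operator. -/
def OrderBoundedOp (T : E → F) : Prop :=
  ∀ a b : E, ∃ c d : F, ∀ x : E, a ≤ x → x ≤ b → c ≤ T x ∧ T x ≤ d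

/-- Abstract Uryson operator: orthogonally additive and order bounded. -/
def UrysonOp (T : E → F) : Prop := OrthAdditive T ∧ OrderBoundedOp T

/-- Lateral ideal. -/
def LateralIdeal (D : Set E) : Prop :=
  (∀ x ∈ D, ∀ y : E, Fragment y x → y ∈ D) ∧
  (∀ x ∈ D, ∀ y ∈ D, EDisj x y → x + y ∈ D)

/-- Band (order) projection on `F`. -/
def IsBandProjection (ρ : F → F) : Prop :=
  (∀ x y : F, ρ (x + y) = ρ x + ρ y) ∧ (∀ x : F, ρ (ρ x) = ρ x) ∧
  (∀ x : F, 0 ≤ x → 0 ≤ ρ x ∧ ρ x ≤ x)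

/-- Partition of unity: mutually disjoint band projections with supremum the identity. -/
def BandPartitionOfUnity {ι : Type*} (ρ : ι → F → F) : Prop :=
  (∀ i, IsBandProjection (ρ i)) ∧
  (∀ i j, i ≠ j → ∀ x : F, ρ i (ρ j x) = 0) ∧
  (∀ x : F, 0 ≤ x → IsLUB {y : F | ∃ s : Finset ι, y = ∑ i ∈ s, ρ i x} x)

/-- Weak order unit. -/
def WeakOrderUnit (u : F) : Prop := 0 ≤ u ∧ ∀ v : F, |v| ⊓ u = 0 → v = 0

/-- Order narrow operator. -/
def OrderNarrow (T : E → F) : Prop :=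
  ∀ e : E, ∃ (ι : Type) (le : ι → ι → Prop) (f g : ι → E) (u : ι → F),
    Nonempty ι ∧ (∀ a, le a a) ∧ (∀ a b c, le a b → le b c → le a c) ∧
    (∀ a b, ∃ c, le a c ∧ le b c) ∧
    (∀ a, f a + g a = e ∧ EDisj (f a) (g a)) ∧
    (∀ a b, le a b → u b ≤ u a) ∧ IsGLB (Set.range u) 0 ∧
    (∀ a, |T (f a) - T (g a)| ≤ u a)

/-- Disjointness of orthogonally additive operators, via the pointwise infimum formula. -/
def OpDisjoint (S R : E → F) : Prop :=
  ∀ f : E, IsGLB {v : F | ∃ g₁ g₂ : E, g₁ + g₂ = f ∧ EDisj g₁ g₂ ∧ v = S g₁ + R g₂} 0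

/-- `S` is a fragment of `T` in `U(E,F)`: `S ⊥ (T - S)`. -/
def OpFragment (S T : E → F) : Prop := OpDisjoint S (fun e => T e - S e)

end Defs

/-- Atomless vector lattice: every nonzero element has a nontrivial fragment. -/
def AtomlessVL (E : Type*) [Lattice E] [AddCommGroup E]
    [CovariantClass E E (· + ·) (· ≤ ·)] : Prop :=
  ∀ e : E, e ≠ 0 → ∃ y : E, Fragment y e ∧ y ≠ 0 ∧ y ≠ e

/-- Principal projection property: the band generated by any element is a projection band. -/
def HasPPP (E : Type*) [Lattice E] [AddCommGroup E]
    [CovariantClass E E (· + ·) (· ≤ ·)] : Prop :=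
  ∀ e : E, ∃ ρ : E → E,
    (∀ x y : E, ρ (x + y) = ρ x + ρ y) ∧ (∀ x : E, 0 ≤ x → 0 ≤ ρ x ∧ ρ x ≤ x) ∧
    ρ e = e ∧ (∀ x : E, EDisj x e → ρ x = 0) ∧ (∀ x : E, EDisj (x - ρ x) e)

section PiX
variable {E F : Type*}
variable [Lattice E] [AddCommGroup E] [CovariantClass E E (· + ·) (· ≤ ·)]
variable [ConditionallyCompleteLattice F] [AddCommGroup F]
variable [CovariantClass F F (· + ·) (· ≤ ·)]

/-- `π^x T (e) = sup { T y : y ⊑ e, y ⊑ x }`. -/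
noncomputable def piX (T : E → F) (x : E) : E → F :=
  fun e => sSup {v : F | ∃ y : E, Fragment y e ∧ Fragment y x ∧ v = T y}

/-- `π^D T (e) = sup { T y : y ⊑ e, y ∈ D }` for a lateral ideal `D`. -/
noncomputable def piD (T : E → F) (D : Set E) : E → F :=
  fun e => sSup {v : F | ∃ y : E, Fragment y e ∧ y ∈ D ∧ v = T y}

end PiX


/-!
A fragment `y` of `x₁ + x₂` satisfies `|y| ≤ |x₁| + |x₂|`, so by Riesz decomposition `y = y₁ + y₂`
with `|yᵢ| ≤ |xᵢ|`. Disjointness of `x₁` and `x₂` makes `y₁ ⊥ y₂`, hence each `yᵢ` is a fragment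
of `y`, so of `e`, and of `xᵢ`. Conversely, a fragment of `x₁` and a fragment of `x₂` that are
both fragments of `e` add up to a common fragment of `e` and `x₁ + x₂`. By orthogonal additivity
the set whose supremum defines `π^{x₁+x₂}T(e)` is therefore the Minkowski sum of the sets for
`x₁` and `x₂`, and suprema of bounded sets add in a lattice-ordered group.
-/

section LatticeOrderedGroup
variable {G : Type*} [Lattice G] [AddCommGroup G] [AddLeftMono G]

lemma inf_add_le_inf_add_inf {u v w : G} (hu : 0 ≤ u) (hv : 0 ≤ v) (hw : 0 ≤ w) :
    u ⊓ (v + w) ≤ u ⊓ v + u ⊓ w := by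
  rw [inf_add, add_inf, add_inf]
  exact le_inf
    (le_inf (inf_le_left.trans (le_add_of_nonneg_right hu))
      (inf_le_left.trans (le_add_of_nonneg_right hw)))
    (le_inf (inf_le_left.trans (le_add_of_nonneg_left hv)) inf_le_right)

lemma abs_sub_le_of_nonneg_of_le' {p n a : G} (hp : 0 ≤ p) (hpa : p ≤ a) (hn : 0 ≤ n)
    (hna : n ≤ a) : |p - n| ≤ a :=
  abs_le'.2 ⟨(sub_le_self p hn).trans hpa, by rw [neg_sub]; exact (sub_le_self n hp).trans hna⟩

lemma exists_add_eq_of_nonneg_of_le_add {y a b : G} (hy : 0 ≤ y) (ha : 0 ≤ a) (hb : 0 ≤ b)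
    (h : y ≤ a + b) : ∃ y₁ y₂, y = y₁ + y₂ ∧ 0 ≤ y₁ ∧ y₁ ≤ a ∧ 0 ≤ y₂ ∧ y₂ ≤ b := by
  refine ⟨y ⊓ a, y - y ⊓ a, (add_sub_cancel _ _).symm, le_inf hy ha, inf_le_right,
    sub_nonneg.2 inf_le_left, ?_⟩
  rw [sub_le_iff_le_add, add_comm, inf_add]
  exact le_inf (le_add_of_nonneg_right hb) h

lemma exists_add_eq_of_abs_le_add {y a b : G} (ha : 0 ≤ a) (hb : 0 ≤ b) (h : |y| ≤ a + b) :
    ∃ y₁ y₂, y = y₁ + y₂ ∧ |y₁| ≤ a ∧ |y₂| ≤ b := by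
  have hpos : y⁺ ≤ |y| := le_add_of_nonneg_right (negPart_nonneg y) |>.trans_eq
    (posPart_add_negPart y)
  have hneg : y⁻ ≤ |y| := le_add_of_nonneg_left (posPart_nonneg y) |>.trans_eq
    (posPart_add_negPart y)
  obtain ⟨p₁, p₂, hp, hp₁, hp₁a, hp₂, hp₂b⟩ :=
    exists_add_eq_of_nonneg_of_le_add (posPart_nonneg y) ha hb (hpos.trans h)
  obtain ⟨n₁, n₂, hn, hn₁, hn₁a, hn₂, hn₂b⟩ :=
    exists_add_eq_of_nonneg_of_le_add (negPart_nonneg y) ha hb (hneg.trans h)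
  refine ⟨p₁ - n₁, p₂ - n₂, ?_, abs_sub_le_of_nonneg_of_le' hp₁ hp₁a hn₁ hn₁a,
    abs_sub_le_of_nonneg_of_le' hp₂ hp₂b hn₂ hn₂b⟩
  rw [← posPart_sub_negPart y, hp, hn]
  abel

end LatticeOrderedGroup

section Fragments
variable {G : Type*} [Lattice G] [AddCommGroup G] {a b c d x y z x₁ x₂ : G}

namespace EDisj

lemma symm (h : EDisj a b) : EDisj b a :=
  (inf_comm _ _).trans h

lemma fragment_add (h : EDisj a b) : Fragment a (a + b) := by
  rwa [Fragment, add_sub_cancel_left]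

lemma fragment_add_left (h : EDisj a b) : Fragment b (a + b) := by
  rw [add_comm]; exact h.symm.fragment_add

end EDisj

variable [AddLeftMono G]

namespace EDisj

lemma mono (h : EDisj a b) (hc : |c| ≤ |a|) (hd : |d| ≤ |b|) : EDisj c d :=
  le_antisymm ((inf_le_inf hc hd).trans_eq h) (le_inf (abs_nonneg c) (abs_nonneg d))

lemma add_right (hb : EDisj a b) (hc : EDisj a c) : EDisj a (b + c) := by
  refine le_antisymm ?_ (le_inf (abs_nonneg a) (abs_nonneg _))
  calc |a| ⊓ |b + c| ≤ |a| ⊓ (|b| + |c|) := inf_le_inf_left _ (abs_add_le b c)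
    _ ≤ |a| ⊓ |b| + |a| ⊓ |c| :=
      inf_add_le_inf_add_inf (abs_nonneg a) (abs_nonneg b) (abs_nonneg c)
    _ = 0 := by rw [show |a| ⊓ |b| = 0 from hb, show |a| ⊓ |c| = 0 from hc, add_zero]

lemma add_left (ha : EDisj a c) (hb : EDisj b c) : EDisj (a + b) c :=
  (ha.symm.add_right hb.symm).symm

lemma sub_right (hb : EDisj a b) (hc : EDisj a c) : EDisj a (b - c) := by
  rw [sub_eq_add_neg]
  exact hb.add_right (hc.mono le_rfl (abs_neg c).le)

lemma abs_le_abs_add (h : EDisj a b) : |a| ≤ |a + b| := by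
  have hle : |a| ≤ |a + b| + |b| := by
    simpa using abs_add_le (a + b) (-b)
  calc |a| = |a| ⊓ (|a + b| + |b|) := (inf_eq_left.2 hle).symm
    _ ≤ |a| ⊓ |a + b| + |a| ⊓ |b| :=
      inf_add_le_inf_add_inf (abs_nonneg a) (abs_nonneg _) (abs_nonneg b)
    _ = |a| ⊓ |a + b| := by rw [show |a| ⊓ |b| = 0 from h, add_zero]
    _ ≤ |a + b| := inf_le_right

end EDisj

namespace Fragment

lemma zero_left (x : G) : Fragment 0 x := by
  rw [Fragment, EDisj, abs_zero]
  exact inf_eq_left.2 (abs_nonneg _)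

lemma abs_le (h : Fragment y x) : |y| ≤ |x| := by
  simpa using EDisj.abs_le_abs_add h

lemma trans (hzy : Fragment z y) (hyx : Fragment y x) : Fragment z x := by
  rw [Fragment, ← sub_add_sub_cancel x y z]
  exact (hyx.mono hzy.abs_le le_rfl).add_right hzy

lemma add (h₁ : Fragment x₁ y) (h₂ : Fragment x₂ y) (hd : EDisj x₁ x₂) :
    Fragment (x₁ + x₂) y := by
  refine EDisj.add_left ?_ ?_
  · rw [← sub_sub]; exact EDisj.sub_right h₁ hd
  · rw [add_comm, ← sub_sub]; exact EDisj.sub_right h₂ hd.symm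

lemma of_add_of_edisj (h : Fragment y (x₁ + x₂)) (hd : EDisj y x₂) : Fragment y x₁ := by
  rw [Fragment, show x₁ - y = x₁ + x₂ - y - x₂ by abel]
  exact EDisj.sub_right h hd

lemma exists_add_of_edisj (hd : EDisj x₁ x₂) (hy : Fragment y (x₁ + x₂)) :
    ∃ y₁ y₂, y = y₁ + y₂ ∧ EDisj y₁ y₂ ∧ Fragment y₁ y ∧ Fragment y₂ y ∧
      Fragment y₁ x₁ ∧ Fragment y₂ x₂ := by
  obtain ⟨y₁, y₂, rfl, h₁, h₂⟩ :=
    exists_add_eq_of_abs_le_add (abs_nonneg x₁) (abs_nonneg x₂) (hy.abs_le.trans (abs_add_le _ _))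
  have hy₁₂ : EDisj y₁ y₂ := hd.mono h₁ h₂
  refine ⟨y₁, y₂, rfl, hy₁₂, hy₁₂.fragment_add, hy₁₂.fragment_add_left,
    (hy₁₂.fragment_add.trans hy).of_add_of_edisj (hd.mono h₁ le_rfl), ?_⟩
  rw [add_comm x₁] at hy
  exact (hy₁₂.fragment_add_left.trans hy).of_add_of_edisj (hd.symm.mono h₂ le_rfl)

end Fragment

end Fragments

section PiX
variable {E F : Type*} [Lattice E] [AddCommGroup E]

def commonFragmentValues (T : E → F) (x e : E) : Set F :=
  {v : F | ∃ y : E, Fragment y e ∧ Fragment y x ∧ v = T y}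

lemma piX_eq_sSup_commonFragmentValues [ConditionallyCompleteLattice F] (T : E → F) (x e : E) :
    piX T x e = sSup (commonFragmentValues T x e) :=
  rfl

lemma commonFragmentValues_nonempty [AddLeftMono E] (T : E → F) (x e : E) :
    (commonFragmentValues T x e).Nonempty :=
  ⟨T 0, 0, Fragment.zero_left e, Fragment.zero_left x, rfl⟩

lemma bddAbove_commonFragmentValues [AddLeftMono E] [Lattice F] {T : E → F}
    (hT : OrderBoundedOp T) (x e : E) : BddAbove (commonFragmentValues T x e) := by
  obtain ⟨_, d, hd⟩ := hT (-|e|) (|e|)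
  refine ⟨d, ?_⟩
  rintro _ ⟨y, hye, -, rfl⟩
  obtain ⟨hy, hny⟩ := abs_le'.1 hye.abs_le
  exact (hd y (neg_le.1 hny) hy).2

open Pointwise in
lemma commonFragmentValues_add_of_edisj [AddLeftMono E] [Lattice F] [AddCommGroup F]
    {T : E → F} (hT : OrthAdditive T) {x₁ x₂ : E} (hd : EDisj x₁ x₂) (e : E) :
    commonFragmentValues T (x₁ + x₂) e =
      commonFragmentValues T x₁ e + commonFragmentValues T x₂ e := by
  ext v
  constructor
  · rintro ⟨y, hye, hyx, rfl⟩
    obtain ⟨y₁, y₂, rfl, hy₁₂, hy₁, hy₂, hy₁x, hy₂x⟩ := hyx.exists_add_of_edisj hd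
    exact ⟨T y₁, ⟨y₁, hy₁.trans hye, hy₁x, rfl⟩, T y₂, ⟨y₂, hy₂.trans hye, hy₂x, rfl⟩,
      (hT y₁ y₂ hy₁₂).symm⟩
  · rintro ⟨_, ⟨y₁, hy₁e, hy₁x, rfl⟩, _, ⟨y₂, hy₂e, hy₂x, rfl⟩, rfl⟩
    have hy₁₂ : EDisj y₁ y₂ := hd.mono hy₁x.abs_le hy₂x.abs_le
    exact ⟨y₁ + y₂, hy₁e.add hy₂e hy₁₂,
      (hy₁x.trans hd.fragment_add).add (hy₂x.trans hd.fragment_add_left) hy₁₂,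
      (hT y₁ y₂ hy₁₂).symm⟩

end PiX

theorem piX_add_of_disjoint_general {E F : Type*} [Lattice E] [AddCommGroup E] [CovariantClass E E (· + ·) (· ≤ ·)] [ConditionallyCompleteLattice F] [AddCommGroup F] [CovariantClass F F (· + ·) (· ≤ ·)]
    (T : E → F) (hT : UrysonOp T)
    (x₁ x₂ : E) (hd : EDisj x₁ x₂) :
    ∀ e : E, piX T (x₁ + x₂) e = piX T x₁ e + piX T x₂ e := by
  intro e
  simp only [piX_eq_sSup_commonFragmentValues]
  rw [commonFragmentValues_add_of_edisj hT.1 hd,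
    csSup_add (commonFragmentValues_nonempty T x₁ e) (bddAbove_commonFragmentValues hT.2 x₁ e)
      (commonFragmentValues_nonempty T x₂ e) (bddAbove_commonFragmentValues hT.2 x₂ e)]

theorem piX_add_of_disjoint {E F : Type*} [Lattice E] [AddCommGroup E] [CovariantClass E E (· + ·) (· ≤ ·)] [Module ℝ E] [ConditionallyCompleteLattice F] [AddCommGroup F] [CovariantClass F F (· + ·) (· ≤ ·)] [Module ℝ F]
    (T : E → F) (hT : UrysonOp T) (hpos : PositiveOp T)
    (x₁ x₂ : E) (hd : EDisj x₁ x₂) :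
    ∀ e : E, piX T (x₁ + x₂) e = piX T x₁ e + piX T x₂ e :=
  piX_add_of_disjoint_general T hT x₁ x₂ hd
end

section
/- Let E, F be vector lattices with F Dedekind complete and T : E → F an abstract Uryson operator. Then |T(f)| ≤ |T|(f) for every f ∈ E, where |T| is the modulus of T in the Dedekind complete vector lattice U(E,F), given by |T|(f) = sup{T(g₁) − T(g₂) : f = g₁ ⊔ g₂}. -/
open scoped BigOperators

/-! Splitting `f = f + 0` and `f = 0 + f` puts both `T f` and `-T f` into the set whose supremum
defines `|T|(f)`; that set is bounded above because the pieces of a disjoint decomposition of `f`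
lie in the order interval `[-|f|, |f|]`, on which `T` is order bounded. -/

section Uryson

variable {E F : Type*} [Lattice E] [AddCommGroup E]

/-- A decomposition `f = g₁ ⊔ g₂` into disjoint pieces is written `g₁ + g₂ = f ∧ EDisj g₁ g₂`. -/
def modulusSet [AddCommGroup F] (T : E → F) (f : E) : Set F :=
  {v : F | ∃ g₁ g₂ : E, g₁ + g₂ = f ∧ EDisj g₁ g₂ ∧ v = T g₁ - T g₂}

theorem EDisj.symm_s11 {x y : E} (h : EDisj x y) : EDisj y x := by
  rw [EDisj, inf_comm]
  exact h

variable [CovariantClass E E (· + ·) (· ≤ ·)]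

theorem eDisj_zero_right (x : E) : EDisj x 0 := by
  simp [EDisj]

theorem eDisj_zero_left (x : E) : EDisj 0 x := by
  simp [EDisj]

theorem EDisj.abs_le_abs_add_s11 {x y : E} (h : EDisj x y) : |x| ≤ |x + y| := by
  have hsup : |x| ⊔ |y| = |x| + |y| := by
    rw [← inf_add_sup |x| |y|, show |x| ⊓ |y| = 0 from h, zero_add]
  have hdiff : |x| - |y| ≤ |x + y| :=
    calc |x| - |y| = |(x + y) + -y| - |-y| := by rw [add_neg_cancel_right, abs_neg]
      _ ≤ |x + y| := sub_le_iff_le_add.mpr (abs_add_le _ _)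
  calc |x| = (|x| ⊔ |y|) - |y| := by rw [hsup, add_sub_cancel_right]
    _ = (|x| - |y|) ⊔ 0 := by rw [sup_sub, sub_self]
    _ ≤ |x + y| := sup_le hdiff (abs_nonneg _)

theorem OrthAdditive.map_zero [AddCommGroup F] {T : E → F} (hT : OrthAdditive T) : T 0 = 0 := by
  have h := hT 0 0 (eDisj_zero_right 0)
  rw [add_zero] at h
  exact left_eq_add.mp h

theorem OrderBoundedOp.bddAbove_modulusSet [Lattice F] [AddCommGroup F]
    [CovariantClass F F (· + ·) (· ≤ ·)] {T : E → F} (hT : OrderBoundedOp T) (f : E) :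
    BddAbove (modulusSet T f) := by
  obtain ⟨c, d, hcd⟩ := hT (-|f|) |f|
  have hbound : ∀ g : E, |g| ≤ |f| → c ≤ T g ∧ T g ≤ d := fun g hg =>
    hcd g (neg_le.mpr ((neg_le_abs g).trans hg)) ((le_abs_self g).trans hg)
  refine ⟨d - c, ?_⟩
  rintro v ⟨g₁, g₂, rfl, hdisj, rfl⟩
  have h₁ : |g₁| ≤ |g₁ + g₂| := hdisj.abs_le_abs_add_s11
  have h₂ : |g₂| ≤ |g₁ + g₂| := add_comm g₁ g₂ ▸ hdisj.symm_s11.abs_le_abs_add_s11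
  exact sub_le_sub (hbound g₁ h₁).2 (hbound g₂ h₂).1

end Uryson

theorem abs_apply_le_modulus_general {E F : Type*} [Lattice E] [AddCommGroup E] [CovariantClass E E (· + ·) (· ≤ ·)] [ConditionallyCompleteLattice F] [AddCommGroup F] [CovariantClass F F (· + ·) (· ≤ ·)]
    (T : E → F) (hT : UrysonOp T) :
    ∀ f : E, |T f| ≤
      sSup {v : F | ∃ g₁ g₂ : E, g₁ + g₂ = f ∧ EDisj g₁ g₂ ∧ v = T g₁ - T g₂} := by
  intro f
  have hbdd : BddAbove (modulusSet T f) := hT.2.bddAbove_modulusSet f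
  have hpos : T f ∈ modulusSet T f :=
    ⟨f, 0, add_zero f, eDisj_zero_right f, by rw [hT.1.map_zero, sub_zero]⟩
  have hneg : -T f ∈ modulusSet T f :=
    ⟨0, f, zero_add f, eDisj_zero_left f, by rw [hT.1.map_zero, zero_sub]⟩
  exact abs_le'.mpr ⟨le_csSup hbdd hpos, le_csSup hbdd hneg⟩

theorem abs_apply_le_modulus {E F : Type*} [Lattice E] [AddCommGroup E] [CovariantClass E E (· + ·) (· ≤ ·)] [Module ℝ E] [ConditionallyCompleteLattice F] [AddCommGroup F] [CovariantClass F F (· + ·) (· ≤ ·)] [Module ℝ F]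
    (T : E → F) (hT : UrysonOp T) :
    ∀ f : E, |T f| ≤
      sSup {v : F | ∃ g₁ g₂ : E, g₁ + g₂ = f ∧ EDisj g₁ g₂ ∧ v = T g₁ - T g₂} :=
  abs_apply_le_modulus_general T hT
end
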